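/- Let V = V_1 ⊕ V_2 be a direct sum of F_2-vector spaces, and for i = 1, 2 let H_i be a hyperplane of V_i and A_i = V_i \ H_i. Then E = A_1 ∪ A_2 ⊆ V \ {0} is triangle-free and I_5-free. -/

import Mathlib

open Submodule

def TriangleFreeG {V : Type*} [AddCommGroup V] [Module (ZMod 2) V] (E : Set V) : Prop :=
  ∀ a ∈ E, ∀ b ∈ E, a + b ∉ E

def IFreeG (n : ℕ) {V : Type*} [AddCommGroup V] [Module (ZMod 2) V] (E : Set V) : Prop :=
  ¬ ∃ S : Finset V, S.card = n ∧
      LinearIndependent (ZMod 2) (Subtype.val : ↥(S : Set V) → V) ∧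
      E ∩ (span (ZMod 2) (S : Set V) : Set V) = (S : Set V)

open Module Finset

/-!
If `H` is a hyperplane of `W` over `𝔽₂`, then `W \ H` is a coset of `H`: the sum of two of its
elements lies in `H` and the sum of three lies in `W \ H` again.

Triangle-freeness: two elements of the same `Aᵢ` add up to an element of `Hᵢ`, which is neither
in `Aᵢ` nor (being in `Vᵢ`, and `V₁ ⊓ V₂ = ⊥`) in the other `Aⱼ`; an element of `A₁` plus one of
`A₂` lies in neither `V₁` nor `V₂`.

`I₅`-freeness: if `E ∩ span S = S` for an independent `S` of size `5`, then by pigeonhole three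
elements of `S` lie in the same `Aᵢ`; their sum is again in `Aᵢ ⊆ E` and in `span S`, hence in
`S`, which independence over `𝔽₂` forbids.
-/

section

variable {V : Type*} [AddCommGroup V] [Module (ZMod 2) V]

theorem ZModModule.eq_of_add_eq_zero {x y : V} (h : x + y = 0) : x = y := by
  rwa [add_eq_zero_iff_eq_neg, ZModModule.neg_eq_self] at h

theorem LinearIndepOn.add_add_notMem {S : Set V} (hS : LinearIndepOn (ZMod 2) id S)
    {a b c : V} (ha : a ∈ S) (hb : b ∈ S) (hc : c ∈ S) (hab : a ≠ b) (hac : a ≠ c)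
    (hbc : b ≠ c) : a + b + c ∉ S := by
  intro hx
  have habc : {a, b, c} ⊆ S := by simp [Set.insert_subset_iff, ha, hb, hc]
  have hspan : a + b + c ∈ span (ZMod 2) {a, b, c} :=
    add_mem (add_mem (subset_span (by simp)) (subset_span (by simp))) (subset_span (by simp))
  have hmem : a + b + c ∈ ({a, b, c} : Set V) :=
    (hS.mono habc).mem_span_iff_id.1 hspan (hS.mono (Set.insert_subset hx habc))
  simp only [Set.mem_insert_iff, Set.mem_singleton_iff] at hmem
  rcases hmem with h | h | h
  · rw [add_assoc, add_eq_left] at h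
    exact hbc (ZModModule.eq_of_add_eq_zero h)
  · rw [add_right_comm, add_eq_right] at h
    exact hac (ZModModule.eq_of_add_eq_zero h)
  · rw [add_eq_right] at h
    exact hab (ZModModule.eq_of_add_eq_zero h)

section Hyperplane

variable {W W' H H' : Submodule (ZMod 2) V}

theorem add_mem_of_mem_sdiff (hHW : H ≤ W) (hr : finrank (ZMod 2) H + 1 = finrank (ZMod 2) W)
    {x y : V} (hx : x ∈ (W : Set V) \ H) (hy : y ∈ (W : Set V) \ H) : x + y ∈ H := by
  have : FiniteDimensional (ZMod 2) W := Module.finite_of_finrank_pos (by omega)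
  have hle : H ⊔ span (ZMod 2) {x} ≤ W := sup_le hHW (span_singleton_le_iff_mem _ _ |>.2 hx.1)
  have : FiniteDimensional (ZMod 2) ↥(H ⊔ span (ZMod 2) {x}) := finiteDimensional_of_le hle
  have hlt : H < H ⊔ span (ZMod 2) {x} := left_lt_sup.2 (by simpa using hx.2)
  have hW : H ⊔ span (ZMod 2) {x} = W :=
    eq_of_le_of_finrank_le hle (by have := finrank_lt_finrank_of_lt hlt; omega)
  obtain ⟨h, hh, z, hz, rfl⟩ := mem_sup.1 (hW ▸ hy.1 : y ∈ H ⊔ span (ZMod 2) {x})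
  obtain ⟨c, rfl⟩ := mem_span_singleton.1 hz
  obtain rfl | rfl := (by decide : ∀ c : ZMod 2, c = 0 ∨ c = 1) c
  · exact (hy.2 (by simpa using hh)).elim
  · simpa [add_left_comm x, ZModModule.add_self] using hh

theorem add_add_mem_sdiff (hHW : H ≤ W) (hr : finrank (ZMod 2) H + 1 = finrank (ZMod 2) W)
    {x y z : V} (hx : x ∈ (W : Set V) \ H) (hy : y ∈ (W : Set V) \ H)
    (hz : z ∈ (W : Set V) \ H) : x + y + z ∈ (W : Set V) \ H :=
  ⟨add_mem (add_mem hx.1 hy.1) hz.1, fun h =>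
    hz.2 (add_sub_cancel_left (x + y) z ▸ H.sub_mem h (add_mem_of_mem_sdiff hHW hr hx hy))⟩

theorem notMem_sdiff_of_disjoint (hd : Disjoint W W') {x : V} (hx : x ∈ W) :
    x ∉ (W' : Set V) \ H' := fun h =>
  h.2 (disjoint_def.1 hd x hx h.1 ▸ H'.zero_mem)

theorem add_notMem_union_sdiff (hd : Disjoint W W') (hHW : H ≤ W)
    (hr : finrank (ZMod 2) H + 1 = finrank (ZMod 2) W) {a b : V} (ha : a ∈ (W : Set V) \ H)
    (hb : b ∈ ((W : Set V) \ H) ∪ ((W' : Set V) \ H')) :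
    a + b ∉ ((W : Set V) \ H) ∪ ((W' : Set V) \ H') := by
  rcases hb with hb | hb
  · have hab := add_mem_of_mem_sdiff hHW hr ha hb
    rintro (h | h)
    · exact h.2 hab
    · exact notMem_sdiff_of_disjoint hd (hHW hab) h
  · rintro (h | h)
    · exact notMem_sdiff_of_disjoint hd (add_sub_cancel_left a b ▸ W.sub_mem h.1 ha.1) hb
    · exact notMem_sdiff_of_disjoint hd.symm (add_sub_cancel_right a b ▸ W'.sub_mem h.1 hb.1) ha

theorem triangleFreeG_union_sdiff (hd : Disjoint W W') (hHW : H ≤ W)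
    (hr : finrank (ZMod 2) H + 1 = finrank (ZMod 2) W) (hHW' : H' ≤ W')
    (hr' : finrank (ZMod 2) H' + 1 = finrank (ZMod 2) W') :
    TriangleFreeG (((W : Set V) \ H) ∪ ((W' : Set V) \ H')) := by
  rintro a (ha | ha) b hb
  · exact add_notMem_union_sdiff hd hHW hr ha hb
  · rw [Set.union_comm] at hb ⊢
    exact add_notMem_union_sdiff hd.symm hHW' hr' ha hb

end Hyperplane

theorem card_filter_mem_le_two {A E : Set V} [DecidablePred (· ∈ A)]
    (hA : ∀ x ∈ A, ∀ y ∈ A, ∀ z ∈ A, x + y + z ∈ A) (hAE : A ⊆ E) {S : Finset V}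
    (hS : LinearIndepOn (ZMod 2) id (S : Set V))
    (hspan : E ∩ (span (ZMod 2) (S : Set V) : Set V) = S) :
    #(S.filter (· ∈ A)) ≤ 2 := by
  by_contra! h
  obtain ⟨a, ha, b, hb, c, hc, hab, hac, hbc⟩ := two_lt_card.1 h
  simp only [mem_filter] at ha hb hc
  refine hS.add_add_notMem ha.1 hb.1 hc.1 hab hac hbc (hspan ▸ ⟨hAE (hA _ ha.2 _ hb.2 _ hc.2), ?_⟩)
  exact add_mem (add_mem (subset_span ha.1) (subset_span hb.1)) (subset_span hc.1)

theorem iFreeG_union {A B : Set V} (hA : ∀ x ∈ A, ∀ y ∈ A, ∀ z ∈ A, x + y + z ∈ A)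
    (hB : ∀ x ∈ B, ∀ y ∈ B, ∀ z ∈ B, x + y + z ∈ B) {n : ℕ} (hn : 5 ≤ n) :
    IFreeG n (A ∪ B) := by
  classical
  rintro ⟨S, hcard, hS, hspan⟩
  have hSAB : S.filter (· ∈ A) ∪ S.filter (· ∈ B) = S := by
    rw [← filter_or]
    exact filter_true_of_mem fun x hx => (hspan.symm.subset hx).1
  have := card_filter_mem_le_two hA Set.subset_union_left hS hspan
  have := card_filter_mem_le_two hB Set.subset_union_right hS hspan
  have := hSAB ▸ card_union_le (S.filter (· ∈ A)) (S.filter (· ∈ B))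
  omega

end

theorem stmt15_general {V : Type*} [AddCommGroup V] [Module (ZMod 2) V]
    (V₁ V₂ H₁ H₂ : Submodule (ZMod 2) V) (hc : IsCompl V₁ V₂)
    (hH₁ : H₁ ≤ V₁) (hH₂ : H₂ ≤ V₂)
    (hr₁ : Module.finrank (ZMod 2) H₁ + 1 = Module.finrank (ZMod 2) V₁)
    (hr₂ : Module.finrank (ZMod 2) H₂ + 1 = Module.finrank (ZMod 2) V₂) :
    TriangleFreeG (((V₁ : Set V) \ (H₁ : Set V)) ∪ ((V₂ : Set V) \ (H₂ : Set V))) ∧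
    IFreeG 5 (((V₁ : Set V) \ (H₁ : Set V)) ∪ ((V₂ : Set V) \ (H₂ : Set V))) :=
  ⟨triangleFreeG_union_sdiff hc.disjoint hH₁ hr₁ hH₂ hr₂,
    iFreeG_union (fun _ hx _ hy _ hz => add_add_mem_sdiff hH₁ hr₁ hx hy hz)
      (fun _ hx _ hy _ hz => add_add_mem_sdiff hH₂ hr₂ hx hy hz) le_rfl⟩

theorem stmt15 {V : Type*} [AddCommGroup V] [Module (ZMod 2) V]
    [FiniteDimensional (ZMod 2) V]
    (V₁ V₂ H₁ H₂ : Submodule (ZMod 2) V) (hc : IsCompl V₁ V₂)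
    (hH₁ : H₁ ≤ V₁) (hH₂ : H₂ ≤ V₂)
    (hr₁ : Module.finrank (ZMod 2) H₁ + 1 = Module.finrank (ZMod 2) V₁)
    (hr₂ : Module.finrank (ZMod 2) H₂ + 1 = Module.finrank (ZMod 2) V₂) :
    TriangleFreeG (((V₁ : Set V) \ (H₁ : Set V)) ∪ ((V₂ : Set V) \ (H₂ : Set V))) ∧
    IFreeG 5 (((V₁ : Set V) \ (H₁ : Set V)) ∪ ((V₂ : Set V) \ (H₂ : Set V))) :=
  stmt15_general V₁ V₂ H₁ H₂ hc hH₁ hH₂ hr₁ hr₂
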